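/- arXiv:2506.11641 — 2 statements merged into one kernel-verified Lean document; each statement's English description precedes it below -/
import Mathlib

section
/- One-layer recursion bound for symmetric orthogonal autoencoders: let ρ: ℝ → ℝ be bilipschitz with inverse ρ⁻¹, V ∈ ℝ^{m×r} orthonormal (VᵀV = I_r), b ∈ ℝ^m. For h ∈ ℝ^m let e(h) = ρ(Vᵀ(h − b)) and for c ∈ ℝ^r let d(c) = Vρ⁻¹(c) + b. Then for any h ∈ ℝ^m and z ∈ ℝ^r: ‖h − d(z)‖² ≥ ‖h − [VVᵀ(h − b) + b]‖² + Lip(ρ)⁻² ‖e(h) − z‖², and ‖h − d(z)‖² ≤ ‖h − [VVᵀ(h − b) + b]‖² + Lip(ρ⁻¹)² ‖e(h) − z‖². -/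
open Matrix

private lemma expand_sq {n : ℕ} (a c : Fin n → ℝ) :
    ∑ i, (a i - c i) ^ 2 = a ⬝ᵥ a - 2 * (a ⬝ᵥ c) + c ⬝ᵥ c := by
  simp only [dotProduct, Finset.mul_sum, ← Finset.sum_sub_distrib, ← Finset.sum_add_distrib]
  apply Finset.sum_congr rfl
  intros; ring

private lemma pythagoras {m r : ℕ} (V : Matrix (Fin m) (Fin r) ℝ) (hV : Vᵀ * V = 1)
    (u : Fin m → ℝ) (c : Fin r → ℝ) :
    ∑ i, (u i - (V *ᵥ c) i) ^ 2 =
      (∑ i, (u i - (V *ᵥ (Vᵀ *ᵥ u)) i) ^ 2) + ∑ j, ((Vᵀ *ᵥ u) j - c j) ^ 2 := by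
  have A : ∀ x : Fin r → ℝ, (V *ᵥ x) ⬝ᵥ (V *ᵥ x) = x ⬝ᵥ x := by
    intro x
    rw [dotProduct_mulVec, ← mulVec_transpose, mulVec_mulVec, hV, one_mulVec]
  have B : ∀ x : Fin r → ℝ, u ⬝ᵥ (V *ᵥ x) = (Vᵀ *ᵥ u) ⬝ᵥ x := by
    intro x
    rw [dotProduct_mulVec, ← mulVec_transpose]
  rw [expand_sq, expand_sq, expand_sq, A, A, B, B]
  ring

theorem one_layer_recursion_bound (m r : ℕ)
    (ρ ρinv : ℝ → ℝ)
    (hli : Function.LeftInverse ρinv ρ) (hri : Function.RightInverse ρinv ρ)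
    (K Kinv : ℝ) (hK0 : 0 < K) (hKinv0 : 0 ≤ Kinv)
    (hK : ∀ x y : ℝ, |ρ x - ρ y| ≤ K * |x - y|)
    (hKinv : ∀ x y : ℝ, |ρinv x - ρinv y| ≤ Kinv * |x - y|)
    (V : Matrix (Fin m) (Fin r) ℝ) (hV : Vᵀ * V = 1) (b : Fin m → ℝ)
    (h : Fin m → ℝ) (z : Fin r → ℝ) :
    (∑ i, ((h - (V *ᵥ (fun j => ρinv (z j)) + b)) i) ^ 2) ≥
      (∑ i, ((h - (V *ᵥ (Vᵀ *ᵥ (h - b)) + b)) i) ^ 2) +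
        K⁻¹ ^ 2 * (∑ j, (((fun j => ρ ((Vᵀ *ᵥ (h - b)) j)) - z) j) ^ 2) ∧
    (∑ i, ((h - (V *ᵥ (fun j => ρinv (z j)) + b)) i) ^ 2) ≤
      (∑ i, ((h - (V *ᵥ (Vᵀ *ᵥ (h - b)) + b)) i) ^ 2) +
        Kinv ^ 2 * (∑ j, (((fun j => ρ ((Vᵀ *ᵥ (h - b)) j)) - z) j) ^ 2) := by
  set u : Fin m → ℝ := h - b with hu
  set w : Fin r → ℝ := Vᵀ *ᵥ u with hw
  have hrw1 : ∀ (c : Fin r → ℝ) (i : Fin m),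
      (h - (V *ᵥ c + b)) i = u i - (V *ᵥ c) i := by
    intro c i; simp [hu, Pi.sub_apply, Pi.add_apply]; ring
  have key : ∀ c : Fin r → ℝ,
      (∑ i, ((h - (V *ᵥ c + b)) i) ^ 2) =
        (∑ i, ((h - (V *ᵥ (Vᵀ *ᵥ (h - b)) + b)) i) ^ 2) + ∑ j, (w j - c j) ^ 2 := by
    intro c
    have e1 : (∑ i, ((h - (V *ᵥ c + b)) i) ^ 2) = ∑ i, (u i - (V *ᵥ c) i) ^ 2 := by
      apply Finset.sum_congr rfl; intro i _; rw [hrw1]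
    have e2 : (∑ i, ((h - (V *ᵥ (Vᵀ *ᵥ (h - b)) + b)) i) ^ 2)
        = ∑ i, (u i - (V *ᵥ (Vᵀ *ᵥ u)) i) ^ 2 := by
      apply Finset.sum_congr rfl; intro i _; rw [← hu, hrw1]
    rw [e1, e2, pythagoras V hV u c, hw]
  have hkey := key (fun j => ρinv (z j))
  -- componentwise bounds
  have hlow : ∀ j, K⁻¹ ^ 2 * (ρ (w j) - z j) ^ 2 ≤ (w j - ρinv (z j)) ^ 2 := by
    intro j
    have h1 : |ρ (w j) - ρ (ρinv (z j))| ≤ K * |w j - ρinv (z j)| := hK _ _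
    rw [hri (z j)] at h1
    have h2 : (ρ (w j) - z j) ^ 2 ≤ K ^ 2 * (w j - ρinv (z j)) ^ 2 := by
      nlinarith [h1, abs_nonneg (ρ (w j) - z j), abs_nonneg (w j - ρinv (z j)),
        sq_abs (ρ (w j) - z j), sq_abs (w j - ρinv (z j)), hK0]
    have hK2 : (0:ℝ) < K ^ 2 := by positivity
    rw [inv_pow, inv_mul_le_iff₀ hK2]
    linarith [h2]
  have hhigh : ∀ j, (w j - ρinv (z j)) ^ 2 ≤ Kinv ^ 2 * (ρ (w j) - z j) ^ 2 := by
    intro j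
    have h1 : |ρinv (ρ (w j)) - ρinv (z j)| ≤ Kinv * |ρ (w j) - z j| := hKinv _ _
    rw [hli (w j)] at h1
    nlinarith [h1, hKinv0, abs_nonneg (ρ (w j) - z j), abs_nonneg (w j - ρinv (z j)), sq_abs (ρ (w j) - z j), sq_abs (w j - ρinv (z j))]
  have hsum_eq : (∑ j, (((fun j => ρ ((Vᵀ *ᵥ (h - b)) j)) - z) j) ^ 2)
      = ∑ j, (ρ (w j) - z j) ^ 2 := by
    apply Finset.sum_congr rfl; intro j _; simp [hw, hu]
  constructor
  · rw [hkey, hsum_eq, ge_iff_le, add_le_add_iff_left, Finset.mul_sum]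
    exact Finset.sum_le_sum fun j _ => hlow j
  · rw [hkey, hsum_eq, add_le_add_iff_left, Finset.mul_sum]
    exact Finset.sum_le_sum fun j _ => hhigh j
end

section
/- Layer-wise lower bound for the reconstruction error of symmetric orthogonal autoencoders: with notation of the SOAE setting (layers e_j(h) = ρ(V_jᵀ(h − b_j)), d_j(c) = V_j ρ⁻¹(c) + b_j, partial encoders E_k = e_k∘⋯∘e_1, E_0 = id, reconstruction ℛ(v) = (d_1∘⋯∘d_l)(E_l(v))), for every v ∈ ℝ^{n₀}: ‖v − ℛ(v)‖² ≥ Σ_{k=0}^{l−1} Lip(ρ)^{−2k} ‖E_k(v) − [V_{k+1}V_{k+1}ᵀ(E_k(v) − b_{k+1}) + b_{k+1}]‖². -/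
open Matrix

/-- Partial encoder of a symmetric orthogonal autoencoder:
`e_j(h) = ρ(V_jᵀ(h - b_j))` (componentwise `ρ`). -/
def encO (ρ : ℝ → ℝ) (n : ℕ → ℕ)
    (V : (j : ℕ) → Matrix (Fin (n j)) (Fin (n (j + 1))) ℝ)
    (b : (j : ℕ) → Fin (n j) → ℝ) :
    (l : ℕ) → (Fin (n 0) → ℝ) → Fin (n l) → ℝ
  | 0, v => v
  | l + 1, v => fun i => ρ (((V l)ᵀ *ᵥ (encO ρ n V b l v - b l)) i)

/-- Partial decoder: `d_j(c) = V_j ρ⁻¹(c) + b_j` (componentwise `ρ⁻¹`). -/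
def decO (ρinv : ℝ → ℝ) (n : ℕ → ℕ)
    (V : (j : ℕ) → Matrix (Fin (n j)) (Fin (n (j + 1))) ℝ)
    (b : (j : ℕ) → Fin (n j) → ℝ) :
    (l : ℕ) → (Fin (n l) → ℝ) → Fin (n 0) → ℝ
  | 0, c => c
  | l + 1, c => decO ρinv n V b l (V l *ᵥ (fun i => ρinv (c i)) + b l)



lemma soae_pyth {m p : ℕ} (V : Matrix (Fin m) (Fin p) ℝ) (hV : Vᵀ * V = 1)
    (u : Fin m → ℝ) (x : Fin p → ℝ) :
    ∑ i, ((u - V *ᵥ x) i) ^ 2 =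
      ∑ i, ((u - (V *ᵥ (Vᵀ *ᵥ u))) i) ^ 2 + ∑ j, ((Vᵀ *ᵥ u - x) j) ^ 2 := by
  have hd : ∀ (y : Fin p → ℝ) (w : Fin m → ℝ), (V *ᵥ y) ⬝ᵥ w = y ⬝ᵥ (Vᵀ *ᵥ w) := by
    intro y w
    rw [mulVec_transpose, dotProduct_comm (V *ᵥ y) w, dotProduct_mulVec, dotProduct_comm]
  have hsq : ∀ {q : ℕ} (w : Fin q → ℝ), ∑ i, (w i) ^ 2 = w ⬝ᵥ w := by
    intro q w; simp [dotProduct, sq]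
  have e1 : (V *ᵥ x) ⬝ᵥ (V *ᵥ x) = x ⬝ᵥ x := by
    rw [hd, mulVec_mulVec, hV, one_mulVec]
  have e2 : (V *ᵥ (Vᵀ *ᵥ u)) ⬝ᵥ (V *ᵥ (Vᵀ *ᵥ u)) = (Vᵀ *ᵥ u) ⬝ᵥ (Vᵀ *ᵥ u) := by
    rw [hd, mulVec_mulVec, hV, one_mulVec]
  have e3 : (V *ᵥ (Vᵀ *ᵥ u)) ⬝ᵥ u = (Vᵀ *ᵥ u) ⬝ᵥ (Vᵀ *ᵥ u) := hd _ _
  have e4 : (V *ᵥ x) ⬝ᵥ u = x ⬝ᵥ (Vᵀ *ᵥ u) := hd _ _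
  rw [hsq, hsq, hsq]
  simp only [sub_dotProduct, dotProduct_sub]
  rw [dotProduct_comm u (V *ᵥ x), dotProduct_comm u (V *ᵥ (Vᵀ *ᵥ u)),
    dotProduct_comm x (Vᵀ *ᵥ u)] at *
  linarith [e1, e2, e3, e4]

lemma soae_aux (ρ ρinv : ℝ → ℝ)
    (hri : Function.RightInverse ρinv ρ)
    (n : ℕ → ℕ)
    (V : (j : ℕ) → Matrix (Fin (n j)) (Fin (n (j + 1))) ℝ)
    (hV : ∀ j, (V j)ᵀ * V j = 1)
    (b : (j : ℕ) → Fin (n j) → ℝ)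
    (K : ℝ) (hK0 : 0 < K)
    (hK : ∀ x y : ℝ, |ρ x - ρ y| ≤ K * |x - y|) :
    ∀ (l : ℕ) (v : Fin (n 0) → ℝ) (c : Fin (n l) → ℝ),
      (∑ k ∈ Finset.range l, K⁻¹ ^ (2 * k) *
          (∑ i, ((encO ρ n V b k v -
            (V k *ᵥ ((V k)ᵀ *ᵥ (encO ρ n V b k v - b k)) + b k)) i) ^ 2))
        + K⁻¹ ^ (2 * l) * ∑ i, ((encO ρ n V b l v - c) i) ^ 2
      ≤ ∑ i, ((v - decO ρinv n V b l c) i) ^ 2 := by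
  intro l
  induction l with
  | zero => intro v c; simp [encO, decO]
  | succ l ih =>
    intro v c
    set x : Fin (n (l + 1)) → ℝ := fun i => ρinv (c i) with hx
    have hdec : decO ρinv n V b (l + 1) c = decO ρinv n V b l (V l *ᵥ x + b l) := rfl
    have key := ih v (V l *ᵥ x + b l)
    rw [hdec]
    refine le_trans ?_ key
    rw [Finset.sum_range_succ, add_assoc]
    gcongr ?_ + ?_
    · exact le_refl _
    set u : Fin (n l) → ℝ := encO ρ n V b l v - b l with hu
    have hEl : encO ρ n V b l v - (V l *ᵥ x + b l) = u - V l *ᵥ x := by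
      rw [hu]; funext i; simp only [Pi.sub_apply, Pi.add_apply]; ring
    have hproj : encO ρ n V b l v - (V l *ᵥ ((V l)ᵀ *ᵥ (encO ρ n V b l v - b l)) + b l)
        = u - V l *ᵥ ((V l)ᵀ *ᵥ u) := by
      rw [hu]; funext i; simp only [Pi.sub_apply, Pi.add_apply]; ring
    rw [hEl, hproj, soae_pyth (V l) (hV l) u x,
      mul_add (K⁻¹ ^ (2 * l)) (∑ i, ((u - V l *ᵥ ((V l)ᵀ *ᵥ u)) i) ^ 2)
        (∑ j, (((V l)ᵀ *ᵥ u - x) j) ^ 2)]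
    gcongr ?_ + ?_
    · exact le_refl _
    -- remains: K⁻¹^(2*(l+1)) * ∑ (encO (l+1) v - c)² ≤ K⁻¹^(2*l) * ∑ ((Vᵀ u - x) j)²
    have henc : ∀ j, encO ρ n V b (l + 1) v j = ρ (((V l)ᵀ *ᵥ u) j) := fun j => rfl
    have hcoord : ∀ j, ((encO ρ n V b (l + 1) v - c) j) ^ 2 ≤ K ^ 2 * (((V l)ᵀ *ᵥ u - x) j) ^ 2 := by
      intro j
      have h1 : |ρ (((V l)ᵀ *ᵥ u) j) - ρ (x j)| ≤ K * |((V l)ᵀ *ᵥ u) j - x j| := hK _ _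
      have h2 : ρ (x j) = c j := hri (c j)
      have h3 := abs_nonneg (((V l)ᵀ *ᵥ u) j - x j)
      calc ((encO ρ n V b (l + 1) v - c) j) ^ 2
          = |ρ (((V l)ᵀ *ᵥ u) j) - ρ (x j)| ^ 2 := by
            simp only [Pi.sub_apply]; rw [henc j, h2, sq_abs]
        _ ≤ (K * |((V l)ᵀ *ᵥ u) j - x j|) ^ 2 := by
            apply pow_le_pow_left₀ (abs_nonneg _) h1
        _ = K ^ 2 * (((V l)ᵀ *ᵥ u - x) j) ^ 2 := by
            simp only [Pi.sub_apply]; rw [mul_pow, sq_abs]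
    have hsum : ∑ j, ((encO ρ n V b (l + 1) v - c) j) ^ 2
        ≤ K ^ 2 * ∑ j, (((V l)ᵀ *ᵥ u - x) j) ^ 2 := by
      rw [Finset.mul_sum]
      exact Finset.sum_le_sum fun j _ => hcoord j
    have hKpow : (0:ℝ) < K⁻¹ ^ (2 * (l + 1)) := pow_pos (inv_pos.mpr hK0) _
    calc K⁻¹ ^ (2 * (l + 1)) * ∑ j, ((encO ρ n V b (l + 1) v - c) j) ^ 2
        ≤ K⁻¹ ^ (2 * (l + 1)) * (K ^ 2 * ∑ j, (((V l)ᵀ *ᵥ u - x) j) ^ 2) := by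
          exact mul_le_mul_of_nonneg_left hsum hKpow.le
      _ = K⁻¹ ^ (2 * l) * ∑ j, (((V l)ᵀ *ᵥ u - x) j) ^ 2 := by
          have : K⁻¹ ^ (2 * (l + 1)) * K ^ 2 = K⁻¹ ^ (2 * l) := by
            field_simp
            ring_nf
            rw [← mul_pow, mul_inv_cancel₀ hK0.ne', one_pow, one_mul]
          rw [← mul_assoc, this]

theorem soae_layerwise_lower_bound
    (ρ ρinv : ℝ → ℝ) (η L : ℝ) (hη : 0 < η) (hL : 0 < L)
    (hbl : ∀ x y : ℝ, η * |x - y| ≤ |ρ x - ρ y| ∧ |ρ x - ρ y| ≤ L * |x - y|)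
    (hli : Function.LeftInverse ρinv ρ) (hri : Function.RightInverse ρinv ρ)
    (l : ℕ) (hl : 2 ≤ l) (n : ℕ → ℕ) (hpos : ∀ j, 0 < n j) (hmono : ∀ j, n (j + 1) ≤ n j)
    (V : (j : ℕ) → Matrix (Fin (n j)) (Fin (n (j + 1))) ℝ)
    (hV : ∀ j, (V j)ᵀ * V j = 1)
    (b : (j : ℕ) → Fin (n j) → ℝ)
    (K : ℝ) (hK0 : 0 < K)
    (hK : ∀ x y : ℝ, |ρ x - ρ y| ≤ K * |x - y|) :
    ∀ v : Fin (n 0) → ℝ,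
      (∑ i, ((v - decO ρinv n V b l (encO ρ n V b l v)) i) ^ 2) ≥
        ∑ k ∈ Finset.range l, K⁻¹ ^ (2 * k) *
          (∑ i, ((encO ρ n V b k v -
            (V k *ᵥ ((V k)ᵀ *ᵥ (encO ρ n V b k v - b k)) + b k)) i) ^ 2) := by
  intro v
  have h := soae_aux ρ ρinv hri n V hV b K hK0 hK l v (encO ρ n V b l v)
  simp only [sub_self] at h
  simp only [ge_iff_le]
  have hz : (∑ i, ((0 : Fin (n l) → ℝ) i) ^ 2) = 0 := by simp
  rw [hz, mul_zero, add_zero] at h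
  exact h
end
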